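/- Let R be a domain, n ≥ 1, and B = R[x₁^{±1},…,xₙ^{±1}] the Laurent polynomial ring in n variables over R. Let M be a submonoid of ℤⁿ and R[M] the R-subalgebra of B generated by the monomials x^a with a ∈ M. If R[M] is algebraically closed in B, then R[M] is quasi-factorially closed in B. -/

import Mathlib

/-!
Over a domain, the Newton polytope of `a * b` is the Minkowski sum of those of `a` and `b` (compare
extreme monomials in every direction), so `s + t` lies in the convex hull of `supp (a * b)` for all
`s ∈ supp a`, `t ∈ supp b`. If `a * b ∈ R[M]` that support lies in `M`, and as the hull has integral
vertices, some multiple `N • (s + t)` lies in the monoid it generates, hence in `M`. Algebraic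
closedness makes `M` saturated, `x^(s + t)` being a root of `X ^ N - x^(N • (s + t))`; hence
`supp a + supp b ⊆ M`, and the monomial units `x^t₀`, `x^s₀` (`s₀ ∈ supp a`, `t₀ ∈ supp b`) work.
-/

/-- An `R`-subalgebra `A` of `B` is quasi-factorially closed (qfc) in `B`. -/
def IsQfc {R B : Type*} [CommSemiring R] [CommRing B] [Algebra R B] (A : Subalgebra R B) : Prop :=
  ∀ a b : B, a ≠ 0 → b ≠ 0 → a * b ∈ A →
    ∃ u v : Bˣ, (u : B) * a ∈ A ∧ (v : B) * b ∈ A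

/-- `A` is algebraically closed (ac) in `B` if every element of `B` that is a root of a
nonzero polynomial with coefficients in `A` belongs to `A`. -/
def IsAc {R B : Type*} [CommSemiring R] [CommRing B] [Algebra R B] (A : Subalgebra R B) : Prop :=
  ∀ b : B, (∃ f : Polynomial ↥A, f ≠ 0 ∧ Polynomial.aeval b f = 0) → b ∈ A

/-- For a submonoid `M ⊆ ℤⁿ`, the `R`-subalgebra `R[M]` of the Laurent polynomial ring. -/
noncomputable def monomialSubalgebra (R : Type*) [CommRing R] {n : ℕ}
    (M : AddSubmonoid (Fin n → ℤ)) : Subalgebra R (AddMonoidAlgebra R (Fin n → ℤ)) :=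
  Algebra.adjoin R (AddMonoidAlgebra.of' R (Fin n → ℤ) '' (M : Set (Fin n → ℤ)))

namespace AddMonoidAlgebra

theorem exists_add_mem_support_mul_isMaxOn {R A L : Type*} [Semiring R] [NoZeroDivisors R]
    [AddZeroClass A] [AddCommMonoid L] [LinearOrder L] [IsOrderedCancelAddMonoid L]
    (key : A →+ L) (hkey : Function.Injective key) {a b : R[A]} (ha : a ≠ 0) (hb : b ≠ 0) :
    ∃ p ∈ a.coeff.support, ∃ q ∈ b.coeff.support, p + q ∈ (a * b).coeff.support ∧
      IsMaxOn key a.coeff.support p ∧ IsMaxOn key b.coeff.support q := by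
  obtain ⟨p, hp, hpmax⟩ := a.coeff.support.exists_max_image key (by simpa using ha)
  obtain ⟨q, hq, hqmax⟩ := b.coeff.support.exists_max_image key (by simpa using hb)
  have huniq : UniqueAdd a.coeff.support b.coeff.support p q := fun p' q' hp' hq' he ↦ by
    have := (add_eq_add_iff_eq_and_eq (hpmax p' hp') (hqmax q' hq')).1
      (by rw [← map_add, ← map_add, he])
    exact ⟨hkey this.1, hkey this.2⟩
  refine ⟨p, hp, q, hq, ?_, isMaxOn_iff.2 hpmax, isMaxOn_iff.2 hqmax⟩
  rw [Finsupp.mem_support_iff, coeff_mul_add_of_uniqueAdd huniq]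
  exact mul_ne_zero (Finsupp.mem_support_iff.1 hp) (Finsupp.mem_support_iff.1 hq)

theorem mem_adjoin_of'_image_iff {R G : Type*} [CommSemiring R] [AddMonoid G]
    (M : AddSubmonoid G) {f : R[G]} :
    f ∈ Algebra.adjoin R (of' R G '' M) ↔ ↑f.coeff.support ⊆ (M : Set G) := by
  let T : Submonoid R[G] :=
    { carrier := of' R G '' M
      mul_mem' := by
        rintro _ _ ⟨p, hp, rfl⟩ ⟨q, hq, rfl⟩
        exact ⟨p + q, M.add_mem hp hq, by simp [of'_apply, single_mul_single]⟩
      one_mem' := ⟨0, M.zero_mem, rfl⟩ }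
  rw [← Subalgebra.mem_toSubmodule, Algebra.adjoin_eq_span,
    show Submonoid.closure (of' R G '' M) = T from T.closure_eq, ← mem_supported (R := R),
    supported_eq_span_single]
  rfl

end AddMonoidAlgebra

open AddMonoidAlgebra

abbrev castReal (ι : Type*) : (ι → ℤ) →+ (ι → ℝ) := (Int.castAddHom ℝ).compLeft ι

@[simp] lemma castReal_apply {ι : Type*} (u : ι → ℤ) (j : ι) : castReal ι u j = u j := rfl

theorem add_mem_convexHull_support_mul {R : Type*} [Semiring R] [NoZeroDivisors R] {n : ℕ}
    {a b : R[Fin n → ℤ]} (ha : a ≠ 0) (hb : b ≠ 0) {s t : Fin n → ℤ}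
    (hs : s ∈ a.coeff.support) (ht : t ∈ b.coeff.support) :
    castReal _ (s + t) ∈ convexHull ℝ (castReal _ '' (a * b).coeff.support) := by
  by_contra hst
  obtain ⟨g, u, hgu, hug⟩ := geometric_hahn_banach_closed_point (convex_convexHull ℝ _)
    (((a * b).coeff.support.finite_toSet.image _).isCompact_convexHull (𝕜 := ℝ)).isClosed hst
  let f : (Fin n → ℤ) →+ ℝ := g.toLinearMap.toAddMonoidHom.comp (castReal _)
  -- the lexicographic tie-break makes the maximisers of `f` on the supports unique
  let key : (Fin n → ℤ) →+ Lex (ℝ × Lex (Fin n → ℤ)) :=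
    { toFun p := toLex (f p, toLex p)
      map_zero' := by simp
      map_add' p q := by simp [← toLex_add] }
  have hkey : Function.Injective key := fun p q h ↦
    toLex_inj.1 (congrArg (fun x ↦ (ofLex x).2) h)
  obtain ⟨p, hp, q, hq, hpq, hpmax, hqmax⟩ := exists_add_mem_support_mul_isMaxOn key hkey ha hb
  have hle : f (s + t) ≤ f (p + q) := by
    rw [map_add, map_add]
    exact add_le_add (Prod.Lex.monotone_fst _ _ (hpmax hs)) (Prod.Lex.monotone_fst _ _ (hqmax ht))
  change g _ ≤ g _ at hle
  linarith [hgu _ (subset_convexHull ℝ _ ⟨_, hpq, rfl⟩)]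

theorem exists_int_affine_relation {ι κ : Type*} [Fintype ι] [Finite κ] {y : ι → κ → ℤ}
    {v : κ → ℤ} {w : ι → ℝ} (hw : ∑ i, w i = 1)
    (hwv : ∑ i, w i • castReal κ (y i) = castReal κ v) :
    ∃ (c₀ : ℤ) (c : ι → ℤ), (c₀ ≠ 0 ∨ ∃ i, c i ≠ 0) ∧
      c₀ + ∑ i, c i = 0 ∧ c₀ • v + ∑ i, c i • y i = 0 := by
  -- the vectors `(1, v)`, `(1, y i)` are linearly dependent over `ℝ`, hence over `ℤ`
  let F : Option ι → Option κ → ℤ := fun o j ↦ j.elim 1 (o.elim v y)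
  have hdep : ¬ LinearIndependent ℝ fun o ↦ algebraMap ℤ ℝ ∘ F o := by
    rw [Fintype.not_linearIndependent_iff]
    refine ⟨fun o ↦ o.elim (-1) w, ?_, none, by simp⟩
    ext j
    cases j with
    | none => simp [Fintype.sum_option, F, hw]
    | some j =>
      have := congr_fun hwv j
      simp only [Finset.sum_apply, Pi.smul_apply, castReal_apply, smul_eq_mul] at this
      simp [Fintype.sum_option, F, ← this]
  rw [linearIndependent_algebraMap_comp_iff, Fintype.not_linearIndependent_iff] at hdep
  obtain ⟨c, hc, o, hco⟩ := hdep
  refine ⟨c none, fun i ↦ c (some i), ?_, ?_, ?_⟩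
  · cases o with
    | none => exact .inl hco
    | some i => exact .inr ⟨i, hco⟩
  · simpa [Fintype.sum_option, F] using congr_fun hc none
  · ext j
    simpa [Fintype.sum_option, F] using congr_fun hc (some j)

theorem exists_nsmul_mem_closure_of_mem_convexHull {κ : Type*} [Finite κ] {S : Set (κ → ℤ)}
    {v : κ → ℤ} (hv : castReal κ v ∈ convexHull ℝ (castReal κ '' S)) :
    ∃ N : ℕ, 0 < N ∧ N • v ∈ AddSubmonoid.closure S := by
  obtain ⟨ι, _, z, w, hzS, hz, hw, hw1, hwz⟩ := eq_pos_convex_span_of_mem_convexHull hv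
  choose y hyS hyz using fun i ↦ hzS (Set.mem_range_self i)
  obtain rfl : castReal κ ∘ y = z := funext hyz
  simp only [Function.comp_apply] at hwz
  obtain ⟨c₀, c, hc, hc1, hcv⟩ := exists_int_affine_relation hw1 hwz
  -- by affine independence the integral relation is `c₀` times the real one
  have hcw : ∀ i, (c i : ℝ) = -(c₀ * w i) := by
    intro i
    refine hz.eq_of_sum_eq_sum (w₁ := fun i ↦ (c i : ℝ)) (w₂ := fun i ↦ -(c₀ * w i)) ?_ ?_ i
      (Finset.mem_univ i)
    · have : (c₀ : ℝ) + ∑ i, (c i : ℝ) = 0 := by exact_mod_cast hc1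
      rw [Finset.sum_neg_distrib, ← Finset.mul_sum, hw1, mul_one]
      exact eq_neg_of_add_eq_zero_right this
    · have := congrArg (castReal κ) hcv
      simp only [map_add, map_sum, map_zsmul, map_zero, ← Int.cast_smul_eq_zsmul ℝ] at this
      simp only [Function.comp_apply, neg_smul, mul_smul, Finset.sum_neg_distrib,
        ← Finset.smul_sum, hwz]
      exact eq_neg_of_add_eq_zero_right this
  have hc₀ : c₀ ≠ 0 := by
    rintro rfl
    obtain hc | ⟨i, hci⟩ := hc
    · exact hc rfl
    · exact hci (by simpa using hcw i)
  have hk : ∀ i, 0 ≤ -(c₀ * c i) := by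
    intro i
    have : (0 : ℝ) ≤ -(c₀ * c i) := by
      rw [hcw i]
      nlinarith [mul_self_nonneg (c₀ : ℝ), hw i]
    exact_mod_cast this
  have hsum : (c₀ * c₀).toNat • v = ∑ i, (-(c₀ * c i)).toNat • y i := by
    simp only [← natCast_zsmul, Int.toNat_of_nonneg (mul_self_nonneg _),
      Int.toNat_of_nonneg (hk _)]
    have := congrArg (c₀ • ·) hcv
    simp only [smul_add, Finset.smul_sum, smul_smul, smul_zero] at this
    rw [← sub_eq_zero, ← this]
    simp [neg_smul, Finset.sum_neg_distrib]
  refine ⟨(c₀ * c₀).toNat, Int.lt_toNat.2 (mul_self_pos.2 hc₀), ?_⟩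
  rw [hsum]
  exact sum_mem fun i _ ↦ nsmul_mem (AddSubmonoid.subset_closure (hyS i)) _

open Polynomial in
theorem IsAc.mem_of_pow_mem {R B : Type*} [CommRing R] [CommRing B] [Nontrivial B]
    [Algebra R B] {A : Subalgebra R B} (hA : IsAc A) {x : B} {N : ℕ} (hN : N ≠ 0)
    (hx : x ^ N ∈ A) : x ∈ A := by
  let c : A := ⟨x ^ N, hx⟩
  refine hA x ⟨X ^ N - C c, X_pow_sub_C_ne_zero (Nat.pos_of_ne_zero hN) c, ?_⟩
  simp [c]

section monomialSubalgebra

variable {R : Type*} [CommRing R] {n : ℕ} {M : AddSubmonoid (Fin n → ℤ)}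

theorem mem_monomialSubalgebra_iff {f : R[Fin n → ℤ]} :
    f ∈ monomialSubalgebra R M ↔ ↑f.coeff.support ⊆ (M : Set (Fin n → ℤ)) :=
  mem_adjoin_of'_image_iff M

theorem of'_mem_monomialSubalgebra_iff [Nontrivial R] {u : Fin n → ℤ} :
    of' R _ u ∈ monomialSubalgebra R M ↔ u ∈ M := by
  simp [mem_monomialSubalgebra_iff, of'_apply, Finsupp.support_single]

theorem mem_of_nsmul_mem_of_isAc [Nontrivial R] (hac : IsAc (monomialSubalgebra R M))
    {v : Fin n → ℤ} {N : ℕ} (hN : N ≠ 0) (hv : N • v ∈ M) : v ∈ M := by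
  rw [← of'_mem_monomialSubalgebra_iff (R := R)] at hv ⊢
  exact hac.mem_of_pow_mem hN (by rwa [of'_apply, single_pow, one_pow])

theorem add_mem_of_mul_mem_monomialSubalgebra [IsDomain R] (hac : IsAc (monomialSubalgebra R M))
    {a b : R[Fin n → ℤ]} (ha : a ≠ 0) (hb : b ≠ 0) (hab : a * b ∈ monomialSubalgebra R M)
    {s t : Fin n → ℤ} (hs : s ∈ a.coeff.support) (ht : t ∈ b.coeff.support) : s + t ∈ M := by
  obtain ⟨N, hN, hNmem⟩ :=
    exists_nsmul_mem_closure_of_mem_convexHull (add_mem_convexHull_support_mul ha hb hs ht)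
  exact mem_of_nsmul_mem_of_isAc hac hN.ne'
    (AddSubmonoid.closure_le.2 (mem_monomialSubalgebra_iff.1 hab) hNmem)

theorem of'_mul_mem_monomialSubalgebra {a : R[Fin n → ℤ]} {t : Fin n → ℤ}
    (h : ∀ s ∈ a.coeff.support, t + s ∈ M) : of' R _ t * a ∈ monomialSubalgebra R M := by
  classical
  rw [mem_monomialSubalgebra_iff, of'_apply]
  intro u hu
  obtain ⟨s, hs, rfl⟩ := Finset.mem_image.1 (support_coeff_single_mul_subset a 1 t hu)
  exact h s hs

end monomialSubalgebra

theorem monomialSubalgebra_isQfc_of_isAc_general (R : Type*) [CommRing R] [IsDomain R]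
    (n : ℕ) (M : AddSubmonoid (Fin n → ℤ))
    (hac : IsAc (monomialSubalgebra R M)) :
    IsQfc (monomialSubalgebra R M) := by
  intro a b ha hb hab
  have hsupp : ∀ s ∈ a.coeff.support, ∀ t ∈ b.coeff.support, s + t ∈ M := fun _ hs _ ht ↦
    add_mem_of_mul_mem_monomialSubalgebra hac ha hb hab hs ht
  obtain ⟨s₀, hs₀⟩ : a.coeff.support.Nonempty := by simpa using ha
  obtain ⟨t₀, ht₀⟩ : b.coeff.support.Nonempty := by simpa using hb
  have hunit (u : Fin n → ℤ) : IsUnit (of' R _ u) :=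
    (Group.isUnit (Multiplicative.ofAdd u)).map (of R _)
  refine ⟨(hunit t₀).unit, (hunit s₀).unit, ?_, ?_⟩
  · exact of'_mul_mem_monomialSubalgebra fun s hs ↦ add_comm s t₀ ▸ hsupp s hs t₀ ht₀
  · exact of'_mul_mem_monomialSubalgebra fun t ht ↦ hsupp s₀ hs₀ t ht

/-- If `R[M]` is algebraically closed in `B = R[x₁^{±1},…,xₙ^{±1}]`, then it is qfc in `B`. -/
theorem monomialSubalgebra_isQfc_of_isAc (R : Type*) [CommRing R] [IsDomain R]
    (n : ℕ) (hn : 1 ≤ n) (M : AddSubmonoid (Fin n → ℤ))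
    (hac : IsAc (monomialSubalgebra R M)) :
    IsQfc (monomialSubalgebra R M) :=
  monomialSubalgebra_isQfc_of_isAc_general R n M hac
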